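/- Let 4 < q < p, A > 0, B ≥ 0, C > 0, D > 0, and define φ(t) = (A/2)t² + (B/4)t⁴ − (C/q)t^q − (D/p)t^p for t ≥ 0. Then there exists a unique t₀ > 0 such that φ is strictly increasing on (0, t₀] and strictly decreasing on [t₀, ∞); t₀ is the unique critical point of φ in (0,∞); and φ(t₀) = max_{t ≥ 0} φ(t) > 0. -/

import Mathlib

/-!
For `t > 0` one has `φ'(t) = t³ g(t)` with `g(t) = A t⁻² + B - C t^(q-4) - D t^(p-4)`
(`phiHighReducedDeriv`). Since `q, p > 4`, `g` is strictly decreasing on `(0, ∞)`, tends to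
`+∞` at `0⁺` and to `-∞` at `∞`, so it has exactly one zero `t₀`, and `φ'` is positive on
`(0, t₀)` and negative on `(t₀, ∞)`. As `φ(0) = 0`, the value `φ(t₀)` is a positive maximum.
-/

open Set

/-- The fibering map `φ(t) = (A/2)t² + (B/4)t⁴ - (C/q)t^q - (D/p)t^p` for `4 < q < p`. -/
noncomputable def phiHigh (q p A B C D t : ℝ) : ℝ :=
  A / 2 * t ^ (2 : ℝ) + B / 4 * t ^ (4 : ℝ) - C / q * t ^ q - D / p * t ^ p

open Filter Topology

noncomputable def phiHighReducedDeriv (q p A B C D t : ℝ) : ℝ :=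
  A * t ^ (-2 : ℝ) + B - C * t ^ (q - 4) - D * t ^ (p - 4)

section

variable {q p A B C D : ℝ}

lemma hasDerivAt_phiHigh (hq : q ≠ 0) (hp : p ≠ 0) {t : ℝ} (ht : 0 < t) :
    HasDerivAt (phiHigh q p A B C D) (t ^ (3 : ℝ) * phiHighReducedDeriv q p A B C D t) t := by
  have hpow (e : ℝ) : HasDerivAt (fun x : ℝ => x ^ e) (e * t ^ (e - 1)) t :=
    Real.hasDerivAt_rpow_const (Or.inl ht.ne')
  refine (((((hpow 2).const_mul (A / 2)).add ((hpow 4).const_mul (B / 4))).sub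
    ((hpow q).const_mul (C / q))).sub ((hpow p).const_mul (D / p))).congr_deriv ?_
  have h3 (e : ℝ) : t ^ (3 : ℝ) * t ^ (e - 4) = t ^ (e - 1) := by
    rw [← Real.rpow_add ht]; ring_nf
  have h2 : t ^ (3 : ℝ) * t ^ (-2 : ℝ) = t := by
    rw [← Real.rpow_add ht]; norm_num
  rw [show (2 : ℝ) - 1 = 1 by norm_num, show (4 : ℝ) - 1 = 3 by norm_num, Real.rpow_one,
    phiHighReducedDeriv]
  field_simp
  linear_combination -A * h2 + C * h3 q + D * h3 p

lemma deriv_phiHigh (hq : q ≠ 0) (hp : p ≠ 0) {t : ℝ} (ht : 0 < t) :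
    deriv (phiHigh q p A B C D) t = t ^ (3 : ℝ) * phiHighReducedDeriv q p A B C D t :=
  (hasDerivAt_phiHigh hq hp ht).deriv

lemma phiHigh_zero (hq : q ≠ 0) (hp : p ≠ 0) : phiHigh q p A B C D 0 = 0 := by
  simp [phiHigh, Real.zero_rpow, hq, hp]

lemma continuous_phiHigh (hq : 0 ≤ q) (hp : 0 ≤ p) : Continuous (phiHigh q p A B C D) := by
  unfold phiHigh
  have := Real.continuous_rpow_const hq
  have := Real.continuous_rpow_const hp
  have := Real.continuous_rpow_const (q := 2) (by norm_num)
  have := Real.continuous_rpow_const (q := 4) (by norm_num)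
  fun_prop

lemma continuousOn_phiHighReducedDeriv :
    ContinuousOn (phiHighReducedDeriv q p A B C D) (Ioi 0) := by
  intro t ht
  have hpow (e : ℝ) : ContinuousAt (fun x : ℝ => x ^ e) t :=
    Real.continuousAt_rpow_const t e (Or.inl (ne_of_gt ht))
  exact ((((hpow _).const_mul A).add continuousAt_const).sub ((hpow _).const_mul C)).sub
    ((hpow _).const_mul D) |>.continuousWithinAt

lemma phiHighReducedDeriv_strictAntiOn (hq : 4 ≤ q) (hp : 4 ≤ p) (hA : 0 < A) (hC : 0 ≤ C)
    (hD : 0 ≤ D) :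
    StrictAntiOn (phiHighReducedDeriv q p A B C D) (Ioi 0) := by
  intro x hx y hy hxy
  have hx : 0 < x := hx
  have h2 : y ^ (-2 : ℝ) < x ^ (-2 : ℝ) := Real.rpow_lt_rpow_of_neg hx hxy (by norm_num)
  have hq' : x ^ (q - 4) ≤ y ^ (q - 4) := Real.rpow_le_rpow hx.le hxy.le (by linarith)
  have hp' : x ^ (p - 4) ≤ y ^ (p - 4) := Real.rpow_le_rpow hx.le hxy.le (by linarith)
  simp only [phiHighReducedDeriv]
  nlinarith [mul_lt_mul_of_pos_left h2 hA, mul_le_mul_of_nonneg_left hq' hC,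
    mul_le_mul_of_nonneg_left hp' hD]

lemma tendsto_phiHighReducedDeriv_nhdsGT_zero (hq : 4 < q) (hp : 4 < p) (hA : 0 < A) :
    Tendsto (phiHighReducedDeriv q p A B C D) (𝓝[>] 0) atTop := by
  have hpow {e : ℝ} (he : 0 < e) : Tendsto (fun t : ℝ => t ^ e) (𝓝[>] 0) (𝓝 0) := by
    have := ((Real.continuous_rpow_const he.le).tendsto 0).mono_left
      (nhdsWithin_le_nhds (s := Ioi 0))
    rwa [Real.zero_rpow he.ne'] at this
  have hrest : Tendsto (fun t : ℝ => B - C * t ^ (q - 4) - D * t ^ (p - 4)) (𝓝[>] 0)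
      (𝓝 (B - C * 0 - D * 0)) :=
    (tendsto_const_nhds.sub ((hpow (by linarith)).const_mul C)).sub
      ((hpow (by linarith)).const_mul D)
  refine (((tendsto_rpow_neg_nhdsGT_zero (by norm_num : (-2 : ℝ) < 0)).const_mul_atTop
    hA).atTop_add hrest).congr fun t => ?_
  simp only [phiHighReducedDeriv]; ring

lemma tendsto_phiHighReducedDeriv_atTop (hp : 4 < p) (hC : 0 ≤ C) (hD : 0 < D) :
    Tendsto (phiHighReducedDeriv q p A B C D) atTop atBot := by
  have hbound : Tendsto (fun t : ℝ => (A * t ^ (-2 : ℝ) + B) + -(D * t ^ (p - 4))) atTop atBot :=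
    ((tendsto_rpow_neg_atTop two_pos).const_mul A |>.add_const B).add_atBot
      (tendsto_neg_atTop_atBot.comp ((tendsto_rpow_atTop (by linarith)).const_mul_atTop hD))
  refine tendsto_atBot_mono' _ ?_ hbound
  filter_upwards [eventually_ge_atTop 0] with t ht
  have := mul_nonneg hC (Real.rpow_nonneg ht (q - 4))
  simp only [phiHighReducedDeriv]
  linarith

lemma exists_phiHighReducedDeriv_eq_zero (hq : 4 < q) (hp : 4 < p) (hA : 0 < A) (hC : 0 ≤ C)
    (hD : 0 < D) :
    ∃ t₀, 0 < t₀ ∧ phiHighReducedDeriv q p A B C D t₀ = 0 := by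
  obtain ⟨a, hga, ha⟩ := (((tendsto_phiHighReducedDeriv_nhdsGT_zero hq hp hA).eventually_gt_atTop
    0).and self_mem_nhdsWithin).exists
  obtain ⟨b, hgb, hab⟩ := (((tendsto_phiHighReducedDeriv_atTop hp hC hD).eventually_lt_atBot
    0).and (eventually_ge_atTop a)).exists
  have ha : 0 < a := ha
  obtain ⟨t₀, ht₀, hg⟩ := intermediate_value_Icc' hab
    (continuousOn_phiHighReducedDeriv.mono fun t ht => lt_of_lt_of_le ha ht.1) ⟨hgb.le, hga.le⟩
  exact ⟨t₀, ha.trans_le ht₀.1, hg⟩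

lemma phiHigh_strictMonoOn_Icc (hq : 4 < q) (hp : 4 < p) (hA : 0 < A) (hC : 0 ≤ C) (hD : 0 ≤ D)
    {t₀ : ℝ} (hg : phiHighReducedDeriv q p A B C D t₀ = 0) :
    StrictMonoOn (phiHigh q p A B C D) (Icc 0 t₀) := by
  refine strictMonoOn_of_deriv_pos (convex_Icc 0 t₀)
    (continuous_phiHigh (by linarith) (by linarith)).continuousOn fun t ht => ?_
  rw [interior_Icc] at ht
  have hgt : 0 < phiHighReducedDeriv q p A B C D t :=
    hg ▸ phiHighReducedDeriv_strictAntiOn hq.le hp.le hA hC hD ht.1 (ht.1.trans ht.2) ht.2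
  rw [deriv_phiHigh (by linarith) (by linarith) ht.1]
  exact mul_pos (Real.rpow_pos_of_pos ht.1 3) hgt

lemma phiHigh_strictAntiOn_Ici (hq : 4 < q) (hp : 4 < p) (hA : 0 < A) (hC : 0 ≤ C) (hD : 0 ≤ D)
    {t₀ : ℝ} (ht₀ : 0 < t₀) (hg : phiHighReducedDeriv q p A B C D t₀ = 0) :
    StrictAntiOn (phiHigh q p A B C D) (Ici t₀) := by
  refine strictAntiOn_of_deriv_neg (convex_Ici t₀)
    (continuous_phiHigh (by linarith) (by linarith)).continuousOn fun t ht => ?_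
  rw [interior_Ici] at ht
  have ht0 : 0 < t := ht₀.trans ht
  have hgt : phiHighReducedDeriv q p A B C D t < 0 :=
    hg ▸ phiHighReducedDeriv_strictAntiOn hq.le hp.le hA hC hD ht₀ ht0 ht
  rw [deriv_phiHigh (by linarith) (by linarith) ht0]
  exact mul_neg_of_pos_of_neg (Real.rpow_pos_of_pos ht0 3) hgt

end

theorem phiHigh_shape_general (q p A B C D : ℝ) (hq : 4 < q) (hqp : q < p)
    (hA : 0 < A) (hC : 0 < C) (hD : 0 < D) :
    ∃! t₀ : ℝ, 0 < t₀ ∧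
      StrictMonoOn (phiHigh q p A B C D) (Ioc 0 t₀) ∧
      StrictAntiOn (phiHigh q p A B C D) (Ici t₀) ∧
      deriv (phiHigh q p A B C D) t₀ = 0 ∧
      (∀ t, 0 < t → deriv (phiHigh q p A B C D) t = 0 → t = t₀) ∧
      (∀ t, 0 ≤ t → phiHigh q p A B C D t ≤ phiHigh q p A B C D t₀) ∧
      0 < phiHigh q p A B C D t₀ := by
  have hp : 4 < p := hq.trans hqp
  have hq0 : q ≠ 0 := by linarith
  have hp0 : p ≠ 0 := by linarith
  obtain ⟨t₀, ht₀, hg₀⟩ := exists_phiHighReducedDeriv_eq_zero (B := B) hq hp hA hC.le hD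
  have hmono := phiHigh_strictMonoOn_Icc hq hp hA hC.le hD.le hg₀
  have hanti := phiHigh_strictAntiOn_Ici hq hp hA hC.le hD.le ht₀ hg₀
  have hcrit : ∀ t, 0 < t → deriv (phiHigh q p A B C D) t = 0 → t = t₀ := fun t ht hd => by
    rw [deriv_phiHigh hq0 hp0 ht, mul_eq_zero] at hd
    exact (phiHighReducedDeriv_strictAntiOn hq.le hp.le hA hC.le hD.le).injOn ht ht₀
      ((hd.resolve_left (Real.rpow_pos_of_pos ht 3).ne').trans hg₀.symm)
  have hd₀ : deriv (phiHigh q p A B C D) t₀ = 0 := by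
    rw [deriv_phiHigh hq0 hp0 ht₀, hg₀, mul_zero]
  refine ⟨t₀, ⟨ht₀, hmono.mono Ioc_subset_Icc_self, hanti, hd₀, hcrit, fun t ht => ?_, ?_⟩,
    fun s hs => (hs.2.2.2.2.1 t₀ ht₀ hd₀).symm⟩
  · rcases le_total t t₀ with h | h
    · exact hmono.monotoneOn ⟨ht, h⟩ ⟨ht₀.le, le_rfl⟩ h
    · exact hanti.antitoneOn self_mem_Ici h h
  · simpa [phiHigh_zero hq0 hp0] using hmono ⟨le_rfl, ht₀.le⟩ ⟨ht₀.le, le_rfl⟩ ht₀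

/-- Lemma 5.2 of the paper (model form): for `4 < q < p`, `A > 0`, `B ≥ 0`, `C > 0`, `D > 0`,
there is a unique `t₀ > 0` such that `φ` is strictly increasing on `(0, t₀]`, strictly
decreasing on `[t₀, ∞)`, `t₀` is the unique critical point of `φ` in `(0, ∞)`, and
`φ(t₀) = max_{t ≥ 0} φ(t) > 0`. -/
theorem phiHigh_shape (q p A B C D : ℝ) (hq : 4 < q) (hqp : q < p)
    (hA : 0 < A) (hB : 0 ≤ B) (hC : 0 < C) (hD : 0 < D) :
    ∃! t₀ : ℝ, 0 < t₀ ∧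
      StrictMonoOn (phiHigh q p A B C D) (Ioc 0 t₀) ∧
      StrictAntiOn (phiHigh q p A B C D) (Ici t₀) ∧
      deriv (phiHigh q p A B C D) t₀ = 0 ∧
      (∀ t, 0 < t → deriv (phiHigh q p A B C D) t = 0 → t = t₀) ∧
      (∀ t, 0 ≤ t → phiHigh q p A B C D t ≤ phiHigh q p A B C D t₀) ∧
      0 < phiHigh q p A B C D t₀ :=
  phiHigh_shape_general q p A B C D hq hqp hA hC hD
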